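/- arXiv:2001.02305 — 4 statements merged into one kernel-verified Lean document; each statement's English description precedes it below -/
import Mathlib

section
/- There exist real constants c₁, c₄ such that for all ξ₁, ξ₂ ∈ ℝ, (1/2)ξ₂² + (3c₁ + 1/4)ξ₁²ξ₂ + (−(5/2)c₁ − 1/2)ξ₁⁴ + (2c₄ + δ/2)ξ₁ξ₂ + (−(3/2)c₄ − (3δ/8))ξ₁³ ≥ 0, for every δ ≥ 0, when α = 1/2. -/
/-! Taking c₄ = -δ/4 kills both δ-dependent coefficients, and c₁ = -1/3 leaves a positive
semidefinite quadratic form in (ξ₁², ξ₂). -/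

lemma quartic_form_eq_sum_sq (x y : ℝ) :
    1 / 2 * y ^ 2 - 3 / 4 * x ^ 2 * y + 1 / 3 * x ^ 4
      = 1 / 2 * (y - 3 / 4 * x ^ 2) ^ 2 + 5 / 96 * x ^ 4 := by
  ring

lemma quartic_form_nonneg (x y : ℝ) : 0 ≤ 1 / 2 * y ^ 2 - 3 / 4 * x ^ 2 * y + 1 / 3 * x ^ 4 := by
  rw [quartic_form_eq_sum_sq]
  positivity

theorem stmt_2_general (δ : ℝ) :
    ∃ c₁ c₄ : ℝ, ∀ ξ₁ ξ₂ : ℝ,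
      (1 / 2) * ξ₂ ^ 2 + (3 * c₁ + 1 / 4) * ξ₁ ^ 2 * ξ₂
        + (-(5 / 2) * c₁ - 1 / 2) * ξ₁ ^ 4
        + (2 * c₄ + δ / 2) * ξ₁ * ξ₂
        + (-(3 / 2) * c₄ - 3 * δ / 8) * ξ₁ ^ 3 ≥ 0 := by
  refine ⟨-1 / 3, -δ / 4, fun ξ₁ ξ₂ => ?_⟩
  linear_combination quartic_form_nonneg ξ₁ ξ₂

theorem stmt_2 (δ : ℝ) (hδ : 0 ≤ δ) :
    ∃ c₁ c₄ : ℝ, ∀ ξ₁ ξ₂ : ℝ,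
      (1 / 2) * ξ₂ ^ 2 + (3 * c₁ + 1 / 4) * ξ₁ ^ 2 * ξ₂
        + (-(5 / 2) * c₁ - 1 / 2) * ξ₁ ^ 4
        + (2 * c₄ + δ / 2) * ξ₁ * ξ₂
        + (-(3 / 2) * c₄ - 3 * δ / 8) * ξ₁ ^ 3 ≥ 0 :=
  stmt_2_general δ
end

section
/- If δ > 0, then the polynomial decision problem (∃ c₁, c₄ ∈ ℝ)(∀ ξ₁, ξ₂ ∈ ℝ): (1/2)ξ₂² + (3c₁ + α/2)ξ₁²ξ₂ + ((α−3)c₁ − 1/2)ξ₁⁴ + (2c₄ + δ/2)ξ₁ξ₂ + ((α−2)c₄ − 3δ/8)ξ₁³ ≥ 0 has a solution only if α = 1/2. -/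
/-!
Write the polynomial as `½ξ₂² + Aξ₁²ξ₂ + Bξ₁⁴ + Cξ₁ξ₂ + Dξ₁³`. Along the rays `ξ₂ = sξ₁` it is
`ξ₁²(½s² + Cs) + O(ξ₁³)`, so nonnegativity forces `½s² + Cs ≥ 0` for every `s`, i.e. `C = 0`.
On the axis `ξ₂ = 0` it is `ξ₁²(Bξ₁² + Dξ₁)`, which forces `D = 0`. The two equations
`2c₄ + δ/2 = 0` and `(α - 2)c₄ - 3δ/8 = 0` then give `δ(1 - 2α) = 0`.
-/

open Filter Topology

lemma ContinuousAt.nonneg_of_forall_ne {X : Type*} [TopologicalSpace X] {x : X}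
    [(𝓝[≠] x).NeBot] {f : X → ℝ} (hf : ContinuousAt f x)
    (h : ∀ t ≠ x, 0 ≤ f t) : 0 ≤ f x :=
  ge_of_tendsto (hf.tendsto.mono_left nhdsWithin_le_nhds)
    (eventually_nhdsWithin_of_forall (s := {x}ᶜ) h)

lemma eq_zero_of_forall_quadratic_nonneg {a b : ℝ} (h : ∀ t : ℝ, 0 ≤ a * t ^ 2 + b * t) :
    b = 0 := by
  have hmin : IsLocalMin (fun t : ℝ => a * t ^ 2 + b * t) 0 :=
    Filter.Eventually.of_forall fun t => by simpa using h t
  have hderiv : HasDerivAt (fun t : ℝ => a * t ^ 2 + b * t) b 0 :=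
    (((hasDerivAt_pow 2 (0 : ℝ)).const_mul a).add
      ((hasDerivAt_id' (0 : ℝ)).const_mul b)).congr_deriv (by simp)
  exact hmin.hasDerivAt_eq_zero hderiv

lemma coeff_eq_zero_of_forall_nonneg {A B C D : ℝ}
    (h : ∀ ξ₁ ξ₂ : ℝ,
      (1 / 2) * ξ₂ ^ 2 + A * ξ₁ ^ 2 * ξ₂ + B * ξ₁ ^ 4 + C * ξ₁ * ξ₂ + D * ξ₁ ^ 3 ≥ 0) :
    C = 0 ∧ D = 0 := by
  have hray : ∀ s : ℝ, 0 ≤ 1 / 2 * s ^ 2 + C * s := by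
    intro s
    let g : ℝ → ℝ := fun t => 1 / 2 * s ^ 2 + C * s + (A * s + D) * t + B * t ^ 2
    have hg : ∀ t ≠ 0, 0 ≤ g t := fun t ht =>
      nonneg_of_mul_nonneg_right (a := t ^ 2) (by linear_combination h t (s * t))
        (by positivity)
    simpa [g] using (show Continuous g by fun_prop).continuousAt.nonneg_of_forall_ne hg
  have haxis : ∀ t : ℝ, 0 ≤ B * t ^ 2 + D * t := by
    intro t
    rcases eq_or_ne t 0 with rfl | ht
    · simp
    · exact nonneg_of_mul_nonneg_right (a := t ^ 2) (by linear_combination h t 0)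
        (by positivity)
  exact ⟨eq_zero_of_forall_quadratic_nonneg hray, eq_zero_of_forall_quadratic_nonneg haxis⟩

theorem stmt_3 (δ α : ℝ) (hδ : 0 < δ)
    (hsol : ∃ c₁ c₄ : ℝ, ∀ ξ₁ ξ₂ : ℝ,
      (1 / 2) * ξ₂ ^ 2 + (3 * c₁ + α / 2) * ξ₁ ^ 2 * ξ₂
        + ((α - 3) * c₁ - 1 / 2) * ξ₁ ^ 4
        + (2 * c₄ + δ / 2) * ξ₁ * ξ₂
        + ((α - 2) * c₄ - 3 * δ / 8) * ξ₁ ^ 3 ≥ 0) :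
    α = 1 / 2 := by
  obtain ⟨c₁, c₄, h⟩ := hsol
  obtain ⟨hC, hD⟩ := coeff_eq_zero_of_forall_nonneg h
  have hδα : δ * (1 - 2 * α) = 0 := by linear_combination 8 * hD - 4 * (α - 2) * hC
  have := (mul_eq_zero.mp hδα).resolve_left hδ.ne'
  linarith
end

section
/- For every n ∈ ℕ₀ and every smooth positive 1-periodic function u solving ∂ₜu = √u·(√u)_{xxx}, the functional F_n(u) = ∫_𝕋 (∂ₓⁿ√u)² dx is conserved in time: (d/dt) F_n(u(t)) = 0. -/
open intervalIntegral Function Metric MeasureTheory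
open scoped ContDiff

section Helpers

variable {F : ℝ × ℝ → ℝ}

private lemma sliceX_hasDerivAt (hF : ContDiff ℝ (⊤ : ℕ∞) F) (t x : ℝ) :
    HasDerivAt (fun y => F (t, y)) (fderiv ℝ F (t, x) (0, 1)) x := by
  have h1 : HasFDerivAt F (fderiv ℝ F (t, x)) (t, x) :=
    (hF.differentiable (by simp) (t, x)).hasFDerivAt
  exact h1.comp_hasDerivAt x ((hasDerivAt_const x t).prodMk (hasDerivAt_id x))

private lemma sliceT_hasDerivAt (hF : ContDiff ℝ (⊤ : ℕ∞) F) (t x : ℝ) :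
    HasDerivAt (fun s => F (s, x)) (fderiv ℝ F (t, x) (1, 0)) t := by
  have h1 : HasFDerivAt F (fderiv ℝ F (t, x)) (t, x) :=
    (hF.differentiable (by simp) (t, x)).hasFDerivAt
  exact h1.comp_hasDerivAt t ((hasDerivAt_id t).prodMk (hasDerivAt_const t x))

private lemma smooth_dirDeriv (hF : ContDiff ℝ (⊤ : ℕ∞) F) (w : ℝ × ℝ) :
    ContDiff ℝ (⊤ : ℕ∞) (fun p : ℝ × ℝ => fderiv ℝ F p w) :=
  (hF.fderiv_right (by simp)).clm_apply contDiff_const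

private lemma deriv_swap (hF : ContDiff ℝ (⊤ : ℕ∞) F) (t x : ℝ) :
    deriv (fun s => deriv (fun y => F (s, y)) x) t
      = deriv (fun y => deriv (fun s => F (s, y)) t) x := by
  have hf' : ContDiff ℝ (⊤ : ℕ∞) (fderiv ℝ F) := hF.fderiv_right (by simp)
  set f'' := fderiv ℝ (fderiv ℝ F) (t, x) with hf''def
  have hf'' : HasFDerivAt (fderiv ℝ F) f'' (t, x) :=
    (hf'.differentiable (by simp) (t, x)).hasFDerivAt
  have hsym := second_derivative_symmetric
    (fun y => (hF.differentiable (by simp) y).hasFDerivAt) hf'' ((0 : ℝ), (1 : ℝ)) (1, 0)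
  have hL : HasDerivAt (fun s => fderiv ℝ F (s, x) ((0 : ℝ), (1 : ℝ)))
      (f'' (1, 0) (0, 1)) t := by
    have h2 := hf''.comp_hasDerivAt t ((hasDerivAt_id t).prodMk (hasDerivAt_const t x))
    have h3 := h2.clm_apply (hasDerivAt_const t ((0 : ℝ), (1 : ℝ)))
    simpa using h3
  have hR : HasDerivAt (fun y => fderiv ℝ F (t, y) ((1 : ℝ), (0 : ℝ)))
      (f'' (0, 1) (1, 0)) x := by
    have h2 := hf''.comp_hasDerivAt x ((hasDerivAt_const x t).prodMk (hasDerivAt_id x))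
    have h3 := h2.clm_apply (hasDerivAt_const x ((1 : ℝ), (0 : ℝ)))
    simpa using h3
  have e1 : (fun s => deriv (fun y => F (s, y)) x) = fun s => fderiv ℝ F (s, x) (0, 1) :=
    funext fun s => (sliceX_hasDerivAt hF s x).deriv
  have e2 : (fun y => deriv (fun s => F (s, y)) t) = fun y => fderiv ℝ F (t, y) (1, 0) :=
    funext fun y => (sliceT_hasDerivAt hF t y).deriv
  rw [e1, e2, hL.deriv, hR.deriv]
  exact hsym.symm

private lemma main_ind (hF : ContDiff ℝ (⊤ : ℕ∞) F) : ∀ n : ℕ,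
    ContDiff ℝ (⊤ : ℕ∞) (fun p : ℝ × ℝ => iteratedDeriv n (fun y => F (p.1, y)) p.2) ∧
    ∀ t x : ℝ, deriv (fun s => iteratedDeriv n (fun y => F (s, y)) x) t
      = iteratedDeriv n (fun y => deriv (fun s => F (s, y)) t) x := by
  intro n
  induction n with
  | zero =>
    constructor
    · simpa [iteratedDeriv_zero] using hF
    · intro t x; simp [iteratedDeriv_zero]
  | succ n ih =>
    obtain ⟨ihS, ihT⟩ := ih
    set G : ℝ × ℝ → ℝ := fun p => iteratedDeriv n (fun y => F (p.1, y)) p.2 with hG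
    have hslice : ∀ t : ℝ, (fun y => G (t, y)) = iteratedDeriv n (fun y => F (t, y)) :=
      fun t => rfl
    have key : ∀ p : ℝ × ℝ, iteratedDeriv (n + 1) (fun y => F (p.1, y)) p.2
        = fderiv ℝ G p (0, 1) := by
      intro p
      rw [iteratedDeriv_succ, ← hslice p.1]
      exact (sliceX_hasDerivAt ihS p.1 p.2).deriv
    constructor
    · have e : (fun p : ℝ × ℝ => iteratedDeriv (n + 1) (fun y => F (p.1, y)) p.2)
          = fun p => fderiv ℝ G p (0, 1) := funext key
      rw [e]
      exact smooth_dirDeriv ihS _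
    · intro t x
      have eL : (fun s => iteratedDeriv (n + 1) (fun y => F (s, y)) x)
          = fun s => deriv (fun y => G (s, y)) x := by
        funext s; rw [iteratedDeriv_succ, ← hslice s]
      have eswap := deriv_swap ihS t x
      have eInner : (fun y => deriv (fun s => G (s, y)) t)
          = iteratedDeriv n (fun y => deriv (fun s => F (s, y)) t) := by
        funext y
        exact ihT t y
      rw [eL, eswap, eInner, ← iteratedDeriv_succ]

private lemma periodic_deriv' {g : ℝ → ℝ} (hg : Function.Periodic g 1) :
    Function.Periodic (deriv g) 1 := by
  intro x
  have h := deriv_comp_add_const (f := g) (a := (1 : ℝ)) (x := x)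
  have e : (fun y => g (y + 1)) = g := funext fun y => hg y
  rw [← h, e]

private lemma periodic_iteratedDeriv {g : ℝ → ℝ} (hg : Function.Periodic g 1) (k : ℕ) :
    Function.Periodic (iteratedDeriv k g) 1 := by
  induction k with
  | zero => simpa [iteratedDeriv_zero] using hg
  | succ k ih => rw [iteratedDeriv_succ]; exact periodic_deriv' ih

private lemma contDiff_iteratedDeriv {g : ℝ → ℝ} (hg : ContDiff ℝ ∞ g) (k : ℕ) :
    ContDiff ℝ ∞ (iteratedDeriv k g) := by
  rw [iteratedDeriv_eq_iterate]
  exact ContDiff.iterate_deriv k hg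

private lemma hasDerivAt_iteratedDeriv {g : ℝ → ℝ} (hg : ContDiff ℝ ∞ g) (k : ℕ) (x : ℝ) :
    HasDerivAt (iteratedDeriv k g) (iteratedDeriv (k + 1) g x) x := by
  have h1 : ContDiff ℝ ∞ (iteratedDeriv k g) := contDiff_iteratedDeriv hg k
  have h2 := ((h1.differentiable (by simp)) x).hasDerivAt
  rwa [iteratedDeriv_succ]

private lemma iteratedDeriv_add_three {g : ℝ → ℝ} (m : ℕ) :
    iteratedDeriv m (iteratedDeriv 3 g) = iteratedDeriv (m + 3) g := by
  simp only [iteratedDeriv_eq_iterate]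
  exact (Function.iterate_add_apply deriv m 3 g).symm

private lemma iteratedDeriv_const_mul' {g : ℝ → ℝ} (hg : ContDiff ℝ ∞ g) (c : ℝ) (m : ℕ)
    (x : ℝ) : iteratedDeriv m (fun y => c * g y) x = c * iteratedDeriv m g x := by
  rw [← iteratedDerivWithin_univ, ← iteratedDerivWithin_univ]
  exact iteratedDerivWithin_const_mul (Set.mem_univ x) uniqueDiffOn_univ c
    (contDiff_infty.mp hg m).contDiffWithinAt

private lemma integral_zero_of_periodic {f : ℝ → ℝ} (hf : ContDiff ℝ ∞ f)
    (hper : Function.Periodic f 1) (m : ℕ) :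
    ∫ x in (0:ℝ)..1, iteratedDeriv m f x * iteratedDeriv (m + 3) f x = 0 := by
  have hc : ∀ k, Continuous (iteratedDeriv k f) :=
    fun k => (contDiff_iteratedDeriv hf k).continuous
  have hperk : ∀ k, Function.Periodic (iteratedDeriv k f) 1 :=
    periodic_iteratedDeriv hper
  have hu : ∀ x ∈ Set.uIcc (0:ℝ) 1,
      HasDerivAt (iteratedDeriv m f) (iteratedDeriv (m + 1) f x) x :=
    fun x _ => hasDerivAt_iteratedDeriv hf m x
  have hw : ∀ x ∈ Set.uIcc (0:ℝ) 1,
      HasDerivAt (iteratedDeriv (m + 2) f) (iteratedDeriv (m + 3) f x) x := by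
    intro x _
    have := hasDerivAt_iteratedDeriv hf (m + 2) x
    convert this using 2
  have hibp := intervalIntegral.integral_mul_deriv_eq_deriv_mul hu hw
    ((hc (m + 1)).intervalIntegrable 0 1) ((hc (m + 3)).intervalIntegrable 0 1)
  have h2 : (∫ x in (0:ℝ)..1, iteratedDeriv (m + 1) f x * iteratedDeriv (m + 2) f x) = 0 := by
    have hphi : ∀ x ∈ Set.uIcc (0:ℝ) 1,
        HasDerivAt (fun y => iteratedDeriv (m + 1) f y ^ 2 / 2)
          (iteratedDeriv (m + 1) f x * iteratedDeriv (m + 2) f x) x := by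
      intro x _
      have h := ((hasDerivAt_iteratedDeriv hf (m + 1) x).fun_pow 2).div_const 2
      have e : iteratedDeriv (m + 1 + 1) f = iteratedDeriv (m + 2) f := by norm_num
      rw [e] at h
      refine h.congr_deriv ?_
      ring
    have hfc := intervalIntegral.integral_eq_sub_of_hasDerivAt hphi
      (((hc (m + 1)).mul (hc (m + 2))).intervalIntegrable 0 1)
    rw [hfc]
    have e1 : iteratedDeriv (m + 1) f 1 = iteratedDeriv (m + 1) f 0 := by
      simpa using hperk (m + 1) 0
    rw [e1]; ring
  rw [hibp, h2]
  have eu : iteratedDeriv m f 1 = iteratedDeriv m f 0 := by simpa using hperk m 0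
  have ev : iteratedDeriv (m + 2) f 1 = iteratedDeriv (m + 2) f 0 := by
    simpa using hperk (m + 2) 0
  rw [eu, ev]; ring

end Helpers

/-- Conservation of Fₙ(u) = ∫_𝕋 (∂ₓⁿ √u)² dx along the dispersive flow
∂ₜ u = √u (√u)_{xxx}; writing v = √u this reads 2 ∂ₜ v = ∂ₓ³ v. -/
theorem stmt_6 (n : ℕ) (u v : ℝ → ℝ → ℝ)
    (hv : ∀ t x, v t x = Real.sqrt (u t x))
    (hsmooth : ContDiff ℝ (⊤ : ℕ∞) (Function.uncurry v))
    (hpos : ∀ t x, 0 < u t x)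
    (hper : ∀ t x, v t (x + 1) = v t x)
    (hpde : ∀ t x, 2 * deriv (fun s => v s x) t = iteratedDeriv 3 (v t) x) :
    ∀ t : ℝ, deriv (fun s => ∫ x in (0:ℝ)..1, (iteratedDeriv n (v s) x) ^ 2) t = 0 := by
  intro t₀
  have hF : ContDiff ℝ (⊤ : ℕ∞) (Function.uncurry v) := hsmooth
  obtain ⟨hWs, hWt⟩ := main_ind hF n
  obtain ⟨hW's, _⟩ := main_ind hF (n + 3)
  -- `W p = ∂ₓⁿ v (p.1) (p.2)` and `W' p = ∂ₓ^{n+3} v (p.1) (p.2)`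
  have hWsm : ContDiff ℝ (⊤ : ℕ∞) (fun p : ℝ × ℝ => iteratedDeriv n (v p.1) p.2) := hWs
  have hW'sm : ContDiff ℝ (⊤ : ℕ∞) (fun p : ℝ × ℝ => iteratedDeriv (n + 3) (v p.1) p.2) := hW's
  -- slices are smooth
  have hvt : ∀ t : ℝ, ContDiff ℝ ∞ (v t) := by
    intro t
    exact (hF.of_le (by simp)).comp (contDiff_const.prodMk contDiff_id)
  -- the time derivative of W
  have hA : ∀ t x : ℝ, deriv (fun s => iteratedDeriv n (v s) x) t
      = (1 / 2 : ℝ) * iteratedDeriv (n + 3) (v t) x := by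
    intro t x
    have h1 : deriv (fun s => iteratedDeriv n (v s) x) t
        = iteratedDeriv n (fun y => deriv (fun s => v s y) t) x := hWt t x
    have h2 : (fun y => deriv (fun s => v s y) t)
        = fun y => (1 / 2 : ℝ) * iteratedDeriv 3 (v t) y := by
      funext y
      have := hpde t y
      linarith
    rw [h1, h2, iteratedDeriv_const_mul' (contDiff_iteratedDeriv (hvt t) 3) (1/2) n x]
    rw [iteratedDeriv_add_three]
  have hWdiff : ∀ t x : ℝ, HasDerivAt (fun s => iteratedDeriv n (v s) x)
      ((1 / 2 : ℝ) * iteratedDeriv (n + 3) (v t) x) t := by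
    intro t x
    have hcomp : Differentiable ℝ (fun s : ℝ => ((s, x) : ℝ × ℝ)) :=
      differentiable_id.prodMk (differentiable_const x)
    have hd : DifferentiableAt ℝ (fun s => iteratedDeriv n (v s) x) t :=
      ((hWsm.differentiable (by simp)).comp hcomp) t
    have := hd.hasDerivAt
    rwa [hA t x] at this
  have hsq : ∀ t x : ℝ, HasDerivAt (fun s => (iteratedDeriv n (v s) x) ^ 2)
      (iteratedDeriv n (v t) x * iteratedDeriv (n + 3) (v t) x) t := by
    intro t x
    have h := (hWdiff t x).fun_pow 2
    refine h.congr_deriv ?_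
    ring
  -- uniform bound on the derivative near t₀
  have hΦc : Continuous fun p : ℝ × ℝ => iteratedDeriv n (v p.1) p.2
      * iteratedDeriv (n + 3) (v p.1) p.2 := hWsm.continuous.mul hW'sm.continuous
  obtain ⟨C, hC⟩ := (IsCompact.exists_bound_of_continuousOn
    ((isCompact_Icc.prod isCompact_Icc : IsCompact
      ((Set.Icc (t₀ - 1) (t₀ + 1)) ×ˢ (Set.Icc (0:ℝ) 1)))) hΦc.continuousOn)
  have key := intervalIntegral.hasDerivAt_integral_of_dominated_loc_of_deriv_le
    (F := fun s x => (iteratedDeriv n (v s) x) ^ 2)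
    (F' := fun s x => iteratedDeriv n (v s) x * iteratedDeriv (n + 3) (v s) x)
    (bound := fun _ => C) (a := 0) (b := 1) (μ := volume) (x₀ := t₀) (s := ball t₀ 1)
    (ball_mem_nhds t₀ one_pos)
    (Filter.Eventually.of_forall fun s =>
      ((hWsm.continuous.comp (Continuous.prodMk_right s)).pow 2).aestronglyMeasurable)
    (((hWsm.continuous.comp (Continuous.prodMk_right t₀)).pow 2).intervalIntegrable 0 1)
    ((hΦc.comp (Continuous.prodMk_right t₀)).aestronglyMeasurable)
    (Filter.Eventually.of_forall (fun x hx s hs => by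
      have hxmem : x ∈ Set.Icc (0:ℝ) 1 := by
        rw [Set.uIoc_of_le (by norm_num : (0:ℝ) ≤ 1)] at hx
        exact Set.Ioc_subset_Icc_self hx
      have hsmem : s ∈ Set.Icc (t₀ - 1) (t₀ + 1) := by
        have := mem_ball_iff_norm.mp hs
        rw [Real.norm_eq_abs, abs_lt] at this
        constructor <;> linarith [this.1, this.2]
      exact hC _ (Set.mk_mem_prod hsmem hxmem)))
    (intervalIntegrable_const)
    (Filter.Eventually.of_forall (fun x _ s _ => hsq s x))
  rw [key.2.deriv]
  exact integral_zero_of_periodic (hvt t₀) (fun x => hper t₀ x) n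
end

section
/- Discrete chain rule for the discrete Fisher information: for vectors U^{k+1}, U^k ∈ ℝ^N_+ with V^k = √(U^k) componentwise and periodic indexing, F_d[U^{k+1}] − F_d[U^k] = h Σ_{i=0}^{N−1} δF_d(U^{k+1},U^k)_i (U_i^{k+1} − U_i^k), where F_d[U] = (h/2) Σ_i ((δ_i^+ V)² + (δ_i^− V)²) and δF_d(U^{k+1},U^k)_i = −δ_i^{⟨2⟩}(V^{k+1}+V^k) / (V_i^{k+1}+V_i^k). -/
open Finset

/-!
Write `W = V¹ + V⁰` and `D = V¹ - V⁰`, so that `U¹ - U⁰ = W D` and the denominator of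
`δF_d` cancels against `W`. Periodic summation by parts turns `-∑ δ²W · D` into
`∑ δ⁺W · δ⁺D = ∑ ((δ⁺V¹)² - (δ⁺V⁰)²)`, and a periodic shift shows that `F_d[V]` is
`h ∑ (δ⁺V)²`, whence the two sides agree.
-/

section PeriodicSums

variable {G R : Type*} [AddGroup G] [Fintype G] (a : G)

theorem sum_sq_bwdDiff_eq_sum_sq_fwdDiff [CommRing R] (f : G → R) :
    ∑ i, (f i - f (i - a)) ^ 2 = ∑ i, (f (i + a) - f i) ^ 2 := by
  rw [← (Equiv.subRight a).sum_comp (fun i => (f (i + a) - f i) ^ 2)]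
  simp only [Equiv.subRight_apply, sub_add_cancel]

theorem sum_secondDiff_mul [CommRing R] (f g : G → R) :
    ∑ i, (f (i + a) - 2 * f i + f (i - a)) * g i
      = -∑ i, (f (i + a) - f i) * (g (i + a) - g i) := by
  have shift : ∑ i, (f i - f (i - a)) * g i = ∑ i, (f (i + a) - f i) * g (i + a) := by
    rw [← (Equiv.subRight a).sum_comp (fun i => (f (i + a) - f i) * g (i + a))]
    simp only [Equiv.subRight_apply, sub_add_cancel]
  calc ∑ i, (f (i + a) - 2 * f i + f (i - a)) * g i
      = ∑ i, (f (i + a) - f i) * g i - ∑ i, (f i - f (i - a)) * g i := by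
        rw [← sum_sub_distrib]; exact sum_congr rfl fun i _ => by ring
    _ = -∑ i, (f (i + a) - f i) * (g (i + a) - g i) := by
        rw [shift, ← sum_sub_distrib, ← sum_neg_distrib]
        exact sum_congr rfl fun i _ => by ring

theorem discreteFisher_eq_inv_mul_sum_sq [Field R] [CharZero R] {h : R} (hh : h ≠ 0)
    (f : G → R) :
    h / 2 * ∑ i, (((f (i + a) - f i) / h) ^ 2 + ((f i - f (i - a)) / h) ^ 2)
      = h⁻¹ * ∑ i, (f (i + a) - f i) ^ 2 := by
  simp only [div_pow, ← add_div, ← sum_div, sum_add_distrib, sum_sq_bwdDiff_eq_sum_sq_fwdDiff]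
  field_simp
  ring

end PeriodicSums

/-- Discrete chain rule for the discrete Fisher information on a periodic grid. -/
theorem stmt_10 (N : ℕ) [NeZero N] (h : ℝ) (hh : 0 < h)
    (U0 U1 V0 V1 : ZMod N → ℝ)
    (hU0 : ∀ i, 0 < U0 i) (hU1 : ∀ i, 0 < U1 i)
    (hV0 : ∀ i, V0 i = Real.sqrt (U0 i)) (hV1 : ∀ i, V1 i = Real.sqrt (U1 i)) :
    (h / 2) * ∑ i : ZMod N,
        (((V1 (i + 1) - V1 i) / h) ^ 2 + ((V1 i - V1 (i - 1)) / h) ^ 2)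
      - (h / 2) * ∑ i : ZMod N,
        (((V0 (i + 1) - V0 i) / h) ^ 2 + ((V0 i - V0 (i - 1)) / h) ^ 2)
      = h * ∑ i : ZMod N,
        (-(((V1 (i + 1) + V0 (i + 1)) - 2 * (V1 i + V0 i) + (V1 (i - 1) + V0 (i - 1)))
              / h ^ 2) / (V1 i + V0 i)) * (U1 i - U0 i) := by
  have hW : ∀ i, V1 i + V0 i ≠ 0 := fun i => by
    rw [hV1, hV0]; positivity [Real.sqrt_pos.2 (hU1 i)]
  have hU : ∀ i, U1 i - U0 i = (V1 i + V0 i) * (V1 i - V0 i) := fun i => by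
    rw [hV1, hV0, ← sq_sub_sq, Real.sq_sqrt (hU1 i).le, Real.sq_sqrt (hU0 i).le]
  have parts := sum_secondDiff_mul 1 (fun i => V1 i + V0 i) (fun i => V1 i - V0 i)
  rw [discreteFisher_eq_inv_mul_sum_sq 1 hh.ne', discreteFisher_eq_inv_mul_sum_sq 1 hh.ne',
    ← mul_sub, ← sum_sub_distrib]
  calc h⁻¹ * ∑ i, ((V1 (i + 1) - V1 i) ^ 2 - (V0 (i + 1) - V0 i) ^ 2)
      = -h⁻¹ * ∑ i, ((V1 (i + 1) + V0 (i + 1)) - 2 * (V1 i + V0 i)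
          + (V1 (i - 1) + V0 (i - 1))) * (V1 i - V0 i) := by
        rw [parts, neg_mul_neg]
        exact congrArg _ (sum_congr rfl fun i _ => by ring)
    _ = _ := by
        rw [mul_sum, mul_sum]
        refine sum_congr rfl fun i _ => ?_
        rw [hU]
        field_simp [hW i]
end
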